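/- (Claim 6) Let n ≥ 5 be prime and let i, j ∈ [n−2] with i < j. Then D↓_{⟨i+j⟩_n} ∩ F↓_j = {(j,i)} and D↑_{⟨i+j⟩_n} ∩ F↑_j = {(i,j)}, where F↓_t = {downward edge of {t,ℓ} : ℓ ∈ [n]} and F↑_t = {upward edge of {t,ℓ} : ℓ ∈ [n]} are the downward and upward failure-edge sets of node t. -/
import Mathlib


/-- The downward edge of the unordered pair `{k, ℓ}`: `(max k ℓ, min k ℓ)`. -/
def down {n : ℕ} (k ℓ : Fin n) : Fin n × Fin n := (max k ℓ, min k ℓ)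

/-- The upward edge of the unordered pair `{k, ℓ}`: `(min k ℓ, max k ℓ)`. -/
def up {n : ℕ} (k ℓ : Fin n) : Fin n × Fin n := (min k ℓ, max k ℓ)

/-- `D↓_m = {down edge of {k,ℓ} : k,ℓ ∈ [n] \ {n-2}, ⟨k+ℓ⟩_n = m} ∪ {(n-1, n-2)}`. -/
def Ddown (n : ℕ) (hn : 5 ≤ n) (m : ℕ) : Set (Fin n × Fin n) :=
  {e | ∃ k ℓ : Fin n, (k : ℕ) ≠ n - 2 ∧ (ℓ : ℕ) ≠ n - 2 ∧
        ((k : ℕ) + (ℓ : ℕ)) % n = m ∧ e = down k ℓ} ∪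
    {(⟨n - 1, by omega⟩, ⟨n - 2, by omega⟩)}

/-- `D↑_m = {up edge of {k,ℓ} : k,ℓ ∈ [n-1], ⟨k+ℓ⟩_n = m} ∪ {(n-2, n-1)}`. -/
def Dup (n : ℕ) (hn : 5 ≤ n) (m : ℕ) : Set (Fin n × Fin n) :=
  {e | ∃ k ℓ : Fin n, (k : ℕ) < n - 1 ∧ (ℓ : ℕ) < n - 1 ∧
        ((k : ℕ) + (ℓ : ℕ)) % n = m ∧ e = up k ℓ} ∪
    {(⟨n - 2, by omega⟩, ⟨n - 1, by omega⟩)}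

/-- `F↓_t = {down edge of {t,ℓ} : ℓ ∈ [n]}`, the downward failure-edge set of node `t`. -/
def Fdown {n : ℕ} (t : Fin n) : Set (Fin n × Fin n) := {e | ∃ ℓ : Fin n, e = down t ℓ}

/-- `F↑_t = {up edge of {t,ℓ} : ℓ ∈ [n]}`, the upward failure-edge set of node `t`. -/
def Fup {n : ℕ} (t : Fin n) : Set (Fin n × Fin n) := {e | ∃ ℓ : Fin n, e = up t ℓ}

lemma down_sum {n : ℕ} (k ℓ : Fin n) :
    ((down k ℓ).1 : ℕ) + ((down k ℓ).2 : ℕ) = (k : ℕ) + (ℓ : ℕ) := by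
  rcases le_total k ℓ with h | h
  · simp [down, max_eq_right h, min_eq_left h, Nat.add_comm]
  · simp [down, max_eq_left h, min_eq_right h]

lemma up_sum {n : ℕ} (k ℓ : Fin n) :
    ((up k ℓ).1 : ℕ) + ((up k ℓ).2 : ℕ) = (k : ℕ) + (ℓ : ℕ) := by
  rcases le_total k ℓ with h | h
  · simp [up, max_eq_right h, min_eq_left h]
  · simp [up, max_eq_left h, min_eq_right h, Nat.add_comm]

/-- Claim 6: for prime `n ≥ 5` and `i < j` in `[n-2]`,
`D↓_{⟨i+j⟩_n} ∩ F↓_j = {(j,i)}` and `D↑_{⟨i+j⟩_n} ∩ F↑_j = {(i,j)}`. -/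
theorem Ddown_Dup_inter_failure (n : ℕ) (hn : 5 ≤ n) (hp : Nat.Prime n)
    (i j : Fin n) (hij : i < j) (hj : (j : ℕ) < n - 2) :
    Ddown n hn (((i : ℕ) + (j : ℕ)) % n) ∩ Fdown j = {(j, i)} ∧
    Dup n hn (((i : ℕ) + (j : ℕ)) % n) ∩ Fup j = {(i, j)} := by
  have hij' : (i : ℕ) < (j : ℕ) := hij
  have hji : i ≤ j := le_of_lt hij
  constructor
  · ext e
    constructor
    · rintro ⟨hD, ℓ, hF⟩
      rcases hD with ⟨k, ℓ', hk, hℓ', hmod, he⟩ | he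
      · -- main case
        have hsum : (j : ℕ) + (ℓ : ℕ) = (k : ℕ) + (ℓ' : ℕ) := by
          rw [← down_sum j ℓ, ← down_sum k ℓ', ← hF, ← he]
        have hmod2 : ((j : ℕ) + (ℓ : ℕ)) % n = ((j : ℕ) + (i : ℕ)) % n := by
          rw [hsum, hmod]; ring_nf
        have hli : (ℓ : ℕ) = (i : ℕ) := by
          have h1 : (j : ℕ) + (ℓ : ℕ) ≡ (j : ℕ) + (i : ℕ) [MOD n] := hmod2
          have h2 : (ℓ : ℕ) ≡ (i : ℕ) [MOD n] := Nat.ModEq.add_left_cancel' _ h1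
          have h3 : (ℓ : ℕ) % n = (i : ℕ) % n := h2
          rwa [Nat.mod_eq_of_lt ℓ.isLt, Nat.mod_eq_of_lt i.isLt] at h3
        have hℓi : ℓ = i := Fin.ext hli
        subst hℓi
        rw [hF]
        simp only [Set.mem_singleton_iff, down, Prod.mk.injEq]
        exact ⟨max_eq_left hji, min_eq_right hji⟩
      · -- special edge case : contradiction
        exfalso
        rw [hF] at he
        have h2 : (min j ℓ : ℕ) = n - 2 := by
          have := congrArg (fun p => (p.2 : ℕ)) he
          simpa [down] using this
        have : (min j ℓ : ℕ) ≤ (j : ℕ) := min_le_left j ℓ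
        omega
    · rintro rfl
      refine ⟨Or.inl ⟨j, i, by omega, by omega, by rw [Nat.add_comm], ?_⟩, i, ?_⟩ <;>
        · simp only [down, Prod.mk.injEq]
          exact ⟨(max_eq_left hji).symm, (min_eq_right hji).symm⟩
  · ext e
    constructor
    · rintro ⟨hD, ℓ, hF⟩
      rcases hD with ⟨k, ℓ', hk, hℓ', hmod, he⟩ | he
      · have hsum : (j : ℕ) + (ℓ : ℕ) = (k : ℕ) + (ℓ' : ℕ) := by
          rw [← up_sum j ℓ, ← up_sum k ℓ', ← hF, ← he]
        have hmod2 : ((j : ℕ) + (ℓ : ℕ)) % n = ((j : ℕ) + (i : ℕ)) % n := by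
          rw [hsum, hmod]; ring_nf
        have hli : (ℓ : ℕ) = (i : ℕ) := by
          have h1 : (j : ℕ) + (ℓ : ℕ) ≡ (j : ℕ) + (i : ℕ) [MOD n] := hmod2
          have h2 : (ℓ : ℕ) ≡ (i : ℕ) [MOD n] := Nat.ModEq.add_left_cancel' _ h1
          have h3 : (ℓ : ℕ) % n = (i : ℕ) % n := h2
          rwa [Nat.mod_eq_of_lt ℓ.isLt, Nat.mod_eq_of_lt i.isLt] at h3
        have hℓi : ℓ = i := Fin.ext hli
        subst hℓi
        rw [hF]
        simp only [Set.mem_singleton_iff, up, Prod.mk.injEq]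
        exact ⟨min_eq_right hji, max_eq_left hji⟩
      · exfalso
        rw [hF] at he
        have h2 : (min j ℓ : ℕ) = n - 2 := by
          have := congrArg (fun p => (p.1 : ℕ)) he
          simpa [up] using this
        have : (min j ℓ : ℕ) ≤ (j : ℕ) := min_le_left j ℓ
        omega
    · rintro rfl
      refine ⟨Or.inl ⟨i, j, by omega, by omega, rfl, ?_⟩, i, ?_⟩
      · simp only [up, Prod.mk.injEq]
        exact ⟨(min_eq_left hji).symm, (max_eq_right hji).symm⟩
      · simp only [up, Prod.mk.injEq]
        exact ⟨(min_eq_right hji).symm, (max_eq_left hji).symm⟩
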